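/- arXiv:1907.02296 — 2 statements merged into one kernel-verified Lean document; each statement's English description precedes it below -/
import Mathlib

section
/- Equivalence of reachability in global and local semantics: a state q of a network of timed automata is reachable by a global run from the initial configuration if and only if it is reachable by a local run from the initial local configuration. -/
open Classical

/-- Comparison operators appearing in guards `x ~ c`. -/
inductive Cmp | lt | le | eq | ge | gt

def Cmp.sat : Cmp → ℝ → ℤ → Prop
  | .lt, r, c => r < (c : ℝ)
  | .le, r, c => r ≤ (c : ℝ)
  | .eq, r, c => r = (c : ℝ)
  | .ge, r, c => (c : ℝ) ≤ r
  | .gt, r, c => (c : ℝ) < r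

/-- A guard: a finite conjunction of constraints `x ~ c` on clocks. -/
abbrev Guard (Clock : Type) := List (Clock × Cmp × ℤ)

/-- A difference constraint `y₁ - y₂ ◁ c` over variables `V`;
the boolean is `true` for strict `<` and `false` for `≤`. -/
abbrev DiffConstraint (V : Type) := V × V × Bool × ℤ

/-- Satisfaction of a difference constraint. -/
def csat {V : Type} (v : V → ℝ) (c : DiffConstraint V) : Prop :=
  if c.2.2.1 then v c.1 - v c.2.1 < (c.2.2.2 : ℝ) else v c.1 - v c.2.1 ≤ (c.2.2.2 : ℝ)

/-- A network of timed automata: `k` processes, each owning its clocks and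
locations; each action `b` has a domain `dom b` of synchronizing processes, and
for each process in the domain a set of `b`-transitions (location, guard, reset
set, target location), whose guards and resets only mention own clocks. -/
structure Network where
  k : ℕ
  kpos : 0 < k
  Clock : Type
  [clockFin : Fintype Clock]
  owner : Clock → Fin k
  Act : Type
  dom : Act → Finset (Fin k)
  Loc : Fin k → Type
  init : ∀ p, Loc p
  Trans : ∀ (_ : Act) (p : Fin k), Set (Loc p × Guard Clock × Set Clock × Loc p)
  trans_wf : ∀ b p tr, tr ∈ Trans b p →
    (∀ c ∈ tr.2.1, owner c.1 = p) ∧ (∀ x ∈ tr.2.2.1, owner x = p)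

attribute [instance] Network.clockFin

namespace Network

variable (N : Network)

/-- Global (discrete) states of the network. -/
abbrev State := ∀ p, N.Loc p

/-- Variables of local valuations: offset variables `x̃` and reference clocks `t_p`. -/
abbrev LVar := N.Clock ⊕ Fin N.k

/-- Variables of global valuations: offset variables `x̃` and the global reference clock `t`. -/
abbrev GVar := N.Clock ⊕ Unit

abbrev LVal := N.LVar → ℝ

abbrev GVal := N.GVar → ℝ

/-- A local valuation: nonnegative, and each offset is below the owner's reference clock. -/
def IsLVal (v : N.LVal) : Prop :=
  (∀ y, 0 ≤ v y) ∧ ∀ x : N.Clock, v (.inl x) ≤ v (.inr (N.owner x))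

/-- A global valuation: nonnegative, and each offset is below the global time `t`. -/
def IsGVal (v : N.GVal) : Prop :=
  (∀ y, 0 ≤ v y) ∧ ∀ x : N.Clock, v (.inl x) ≤ v (.inr ())

/-- Satisfaction of a guard by a local valuation: the value of clock `x` is
`v t_p - v x̃` where `p` owns `x`. -/
def lgsat (v : N.LVal) (g : Guard N.Clock) : Prop :=
  ∀ c ∈ g, Cmp.sat c.2.1 (v (.inr (N.owner c.1)) - v (.inl c.1)) c.2.2

/-- Satisfaction of a guard by a global valuation: the value of clock `x` is `v t - v x̃`. -/
def ggsat (v : N.GVal) (g : Guard N.Clock) : Prop :=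
  ∀ c ∈ g, Cmp.sat c.2.1 (v (.inr ()) - v (.inl c.1)) c.2.2

/-- Global delay: only the global reference clock advances. -/
def gdelay (v : N.GVal) (δ : ℝ) : N.GVal :=
  fun y => match y with
    | .inl x => v (.inl x)
    | .inr _ => v (.inr ()) + δ

/-- `v'` is obtained from `v` by a (finite) sequence of local delays; equivalently,
each reference clock advances by some nonnegative amount, offsets are unchanged. -/
def ldelayed (v v' : N.LVal) : Prop :=
  ∃ δ : Fin N.k → ℝ, (∀ p, 0 ≤ δ p) ∧
    v' = fun y => match y with
      | .inl x => v (.inl x)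
      | .inr p => v (.inr p) + δ p

/-- Reset of the clocks in `R` in a global valuation. -/
noncomputable def greset (R : Set N.Clock) (v : N.GVal) : N.GVal :=
  fun y => match y with
    | .inl x => if x ∈ R then v (.inr ()) else v (.inl x)
    | .inr u => v (.inr u)

/-- Reset of the clocks in `R` in a local valuation: `x̃` is set to the local
time of the process owning `x`. -/
noncomputable def lreset (R : Set N.Clock) (v : N.LVal) : N.LVal :=
  fun y => match y with
    | .inl x => if x ∈ R then v (.inr (N.owner x)) else v (.inl x)
    | .inr p => v (.inr p)

/-- Global action step on action `b`. -/
def gact (b : N.Act) (c c' : N.State × N.GVal) : Prop :=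
  ∃ tr : ∀ p, p ∈ N.dom b → N.Loc p × Guard N.Clock × Set N.Clock × N.Loc p,
    (∀ p (h : p ∈ N.dom b),
      tr p h ∈ N.Trans b p ∧ (tr p h).1 = c.1 p ∧ (tr p h).2.2.2 = c'.1 p) ∧
    (∀ p, p ∉ N.dom b → c'.1 p = c.1 p) ∧
    (∀ p (h : p ∈ N.dom b), N.ggsat c.2 (tr p h).2.1) ∧
    c'.2 = N.greset {x | ∃ p h, x ∈ (tr p h).2.2.1} c.2

/-- Local action step on action `b`: additionally the reference clocks of the
processes in `dom b` must agree. -/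
def lact (b : N.Act) (c c' : N.State × N.LVal) : Prop :=
  ∃ tr : ∀ p, p ∈ N.dom b → N.Loc p × Guard N.Clock × Set N.Clock × N.Loc p,
    (∀ p (h : p ∈ N.dom b),
      tr p h ∈ N.Trans b p ∧ (tr p h).1 = c.1 p ∧ (tr p h).2.2.2 = c'.1 p) ∧
    (∀ p, p ∉ N.dom b → c'.1 p = c.1 p) ∧
    (∀ p ∈ N.dom b, ∀ p' ∈ N.dom b, c.2 (.inr p) = c.2 (.inr p')) ∧
    (∀ p (h : p ∈ N.dom b), N.lgsat c.2 (tr p h).2.1) ∧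
    c'.2 = N.lreset {x | ∃ p h, x ∈ (tr p h).2.2.1} c.2

/-- Global run on a word of actions: delays and action steps alternate,
starting and ending with a (possibly zero) delay. -/
inductive GRun : List N.Act → (N.State × N.GVal) → (N.State × N.GVal) → Prop
  | nil {q v} (δ : ℝ) (hδ : 0 ≤ δ) : GRun [] (q, v) (q, N.gdelay v δ)
  | cons {b u q v c1 c2} (δ : ℝ) (hδ : 0 ≤ δ)
      (hb : N.gact b (q, N.gdelay v δ) c1) (h : GRun u c1 c2) :
      GRun (b :: u) (q, v) c2

/-- Local run on a word of actions: sequences of local delays and local action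
steps alternate. -/
inductive LRun : List N.Act → (N.State × N.LVal) → (N.State × N.LVal) → Prop
  | nil {q v v'} (hd : N.ldelayed v v') : LRun [] (q, v) (q, v')
  | cons {b u q v v1 c1 c2} (hd : N.ldelayed v v1)
      (hb : N.lact b (q, v1) c1) (h : LRun u c1 c2) :
      LRun (b :: u) (q, v) c2

/-- Local run recording, for each action, its execution time: the common value
of the reference clocks of `dom b` when the step is taken. -/
inductive LRunT : List (N.Act × ℝ) → (N.State × N.LVal) → (N.State × N.LVal) → Prop
  | nil {q v v'} (hd : N.ldelayed v v') : LRunT [] (q, v) (q, v')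
  | cons {b θ u q v v1 c1 c2} (hd : N.ldelayed v v1)
      (hb : N.lact b (q, v1) c1) (hθ : ∀ p ∈ N.dom b, v1 (.inr p) = θ)
      (h : LRunT u c1 c2) :
      LRunT ((b, θ) :: u) (q, v) c2

/-- Equivalence of action sequences: generated by swapping adjacent actions
with disjoint domains. -/
inductive equiv : List N.Act → List N.Act → Prop
  | swap (u w : List N.Act) (a b : N.Act) (h : Disjoint (N.dom a) (N.dom b)) :
      equiv (u ++ a :: b :: w) (u ++ b :: a :: w)
  | refl (u : List N.Act) : equiv u u
  | trans {u v w} : equiv u v → equiv v w → equiv u w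

/-- A local valuation is synchronized if all reference clocks agree. -/
def Synchronized (v : N.LVal) : Prop :=
  ∀ p p' : Fin N.k, v (.inr p) = v (.inr p')

/-- The global valuation associated to a (synchronized) local valuation. -/
def toGlobal (v : N.LVal) : N.GVal :=
  fun y => match y with
    | .inl x => v (.inl x)
    | .inr _ => v (.inr ⟨0, N.kpos⟩)

/-- The synchronized local valuation associated to a global valuation. -/
def toLocal (v : N.GVal) : N.LVal :=
  fun y => match y with
    | .inl x => v (.inl x)
    | .inr _ => v (.inr ())

/-- The synchronized valuations of a set of local valuations. -/
def syncSet (S : Set N.LVal) : Set N.LVal := {v ∈ S | N.Synchronized v}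

/-- The set of local valuations defined by a list of difference constraints. -/
def lzset (L : List (DiffConstraint N.LVar)) : Set N.LVal :=
  {v | N.IsLVal v ∧ ∀ c ∈ L, csat v c}

/-- The set of global valuations defined by a list of difference constraints. -/
def gzset (L : List (DiffConstraint N.GVar)) : Set N.GVal :=
  {v | N.IsGVal v ∧ ∀ c ∈ L, csat v c}

/-- Local zones: sets of local valuations definable by difference constraints. -/
def IsLZone (S : Set N.LVal) : Prop := ∃ L, S = N.lzset L

/-- Global zones: sets of global valuations definable by difference constraints. -/
def IsGZone (S : Set N.GVal) : Prop := ∃ L, S = N.gzset L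

/-- Local-time elapse of a set of local valuations. -/
def lelapse (S : Set N.LVal) : Set N.LVal := {v' | ∃ v ∈ S, N.ldelayed v v'}

/-- Global time elapse of a set of global valuations. -/
def gelapse (S : Set N.GVal) : Set N.GVal :=
  {v' | ∃ v ∈ S, ∃ δ, 0 ≤ δ ∧ v' = N.gdelay v δ}

/-- Local zone graph step on action `b`:
`Z' = local-elapse([R](Z ∩ Z_g ∩ Z_sync))`, required nonempty. -/
def lzstep (b : N.Act) (c c' : N.State × Set N.LVal) : Prop :=
  ∃ tr : ∀ p, p ∈ N.dom b → N.Loc p × Guard N.Clock × Set N.Clock × N.Loc p,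
    (∀ p (h : p ∈ N.dom b),
      tr p h ∈ N.Trans b p ∧ (tr p h).1 = c.1 p ∧ (tr p h).2.2.2 = c'.1 p) ∧
    (∀ p, p ∉ N.dom b → c'.1 p = c.1 p) ∧
    c'.2 = N.lelapse ((N.lreset {x | ∃ p h, x ∈ (tr p h).2.2.1}) ''
      (c.2 ∩ {v | ∀ p (h : p ∈ N.dom b), N.lgsat v (tr p h).2.1}
           ∩ {v | ∀ p ∈ N.dom b, ∀ p' ∈ N.dom b, v (.inr p) = v (.inr p')})) ∧
    (c'.2).Nonempty

/-- Sequence of local zone graph steps along a word. -/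
inductive LZRun : List N.Act → (N.State × Set N.LVal) → (N.State × Set N.LVal) → Prop
  | nil (c) : LZRun [] c c
  | cons {b u c c1 c2} (hb : N.lzstep b c c1) (h : LZRun u c1 c2) :
      LZRun (b :: u) c c2

/-- The initial (discrete) state of the network. -/
def initState : N.State := N.init

/-- The initial global valuation: everything is `0`. -/
def gvalInit : N.GVal := fun _ => 0

/-- The initial local valuation: everything is `0`. -/
def lvalInit : N.LVal := fun _ => 0

/-- The initial node's zone in the local zone graph. -/
def lzoneInit : Set N.LVal := N.lelapse {N.lvalInit}

/-- State `q` is reachable in the global-time semantics. -/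
def GReach (q : N.State) : Prop :=
  ∃ u v, N.GRun u (N.initState, N.gvalInit) (q, v)

/-- State `q` is reachable in the local-time semantics. -/
def LReach (q : N.State) : Prop :=
  ∃ u v, N.LRun u (N.initState, N.lvalInit) (q, v)

/-- Time-abstract simulation between global valuations. -/
def TASim (sim : N.GVal → N.GVal → Prop) : Prop :=
  ∀ v1 v2, sim v1 v2 → ∀ q b δ1 q' v1', 0 ≤ δ1 →
    N.gact b (q, N.gdelay v1 δ1) (q', v1') →
    ∃ δ2, 0 ≤ δ2 ∧ ∃ v2', N.gact b (q, N.gdelay v2 δ2) (q', v2') ∧ sim v1' v2'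

end Network

/-- A local sync graph over a network `N`, based on an abstraction `abs` over
global zones: a subgraph of the local zone graph with covered/uncovered nodes,
satisfying conditions C0–C4. -/
structure SyncGraph (N : Network) (abs : Set N.GVal → Set N.GVal) where
  nodes : Set (N.State × Set N.LVal)
  covered : N.State × Set N.LVal → Prop
  edges : (N.State × Set N.LVal) → (N.State × Set N.LVal) → Prop
  edges_mem : ∀ s s', edges s s' → s ∈ nodes ∧ s' ∈ nodes
  edges_lzg : ∀ s s', edges s s' → ∃ b, N.lzstep b s s'
  init_mem : (N.initState, N.lzoneInit) ∈ nodes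
  init_unc : ¬ covered (N.initState, N.lzoneInit)
  reach : ∀ s ∈ nodes, Relation.ReflTransGen edges (N.initState, N.lzoneInit) s
  unc_succ : ∀ s ∈ nodes, ¬ covered s → ∀ b s', N.lzstep b s s' → edges s s'
  cov_sub : ∀ s ∈ nodes, covered s → ∃ s' ∈ nodes, ¬ covered s' ∧ s.1 = s'.1 ∧
    N.toGlobal '' N.syncSet s.2 ⊆ abs (N.toGlobal '' N.syncSet s'.2)
  cov_nosucc : ∀ s s', covered s → ¬ edges s s'

/-- A list of difference constraints is canonical (every constraint is tight):
no constraint is implied by the remaining ones. -/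
def canonicalL (N : Network) (L : List (DiffConstraint N.LVar)) : Prop :=
  ∀ c ∈ L, ∃ v, N.IsLVal v ∧ (∀ c' ∈ L, c' ≠ c → csat v c') ∧ ¬ csat v c

/-- Minea's region-like equivalence with maximal constant `cmax`. -/
def regEquiv {V : Type} (cmax : ℤ) (v1 v2 : V → ℝ) : Prop :=
  ∀ a b : V, (⌊v1 a - v1 b⌋ = ⌊v2 a - v2 b⌋) ∨
    (⌊v1 a - v1 b⌋ > cmax ∧ ⌊v2 a - v2 b⌋ > cmax) ∨
    (⌊v1 a - v1 b⌋ < -cmax ∧ ⌊v2 a - v2 b⌋ < -cmax)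

/-!
A global run is a local run in which all reference clocks move together, so one direction
is immediate. Conversely, record for every step of a local run its execution time, the common
reference clock of the synchronizing processes. Two adjacent steps executed out of time order
touch disjoint sets of processes, since reference clocks never decrease; as a step only reads
and writes the components of its own processes, such steps commute. Insertion sort therefore
turns the local run into one with nondecreasing execution times, and that run is replayed by
a global run that waits until the next execution time before each step.
-/

namespace Network

variable {N : Network}

@[ext]
structure ProcState (N : Network) (p : Fin N.k) where
  loc : N.Loc p
  time : ℝ
  offset : {x // N.owner x = p} → ℝ

/-- `s ≤ t` when `t` is obtained from `s` by a local delay. -/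
instance (p : Fin N.k) : Preorder (N.ProcState p) where
  le s t := s.loc = t.loc ∧ s.time ≤ t.time ∧ s.offset = t.offset
  le_refl _ := ⟨rfl, le_rfl, rfl⟩
  le_trans _ _ _ h h' := ⟨h.1.trans h'.1, h.2.1.trans h'.2.1, h.2.2.trans h'.2.2⟩

def proj (c : N.State × N.LVal) (p : Fin N.k) : N.ProcState p :=
  ⟨c.1 p, c.2 (.inr p), fun x => c.2 (.inl x)⟩

section Proj

variable {c d : N.State × N.LVal} {p : Fin N.k}

lemma proj_eq_proj_iff : proj c p = proj d p ↔
    c.1 p = d.1 p ∧ c.2 (.inr p) = d.2 (.inr p) ∧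
      ∀ x, N.owner x = p → c.2 (.inl x) = d.2 (.inl x) := by
  simp [proj, ProcState.ext_iff, funext_iff]

lemma proj_le_proj_iff : proj c p ≤ proj d p ↔
    c.1 p = d.1 p ∧ c.2 (.inr p) ≤ d.2 (.inr p) ∧
      ∀ x, N.owner x = p → c.2 (.inl x) = d.2 (.inl x) := by
  show _ ∧ _ ∧ _ ↔ _
  simp [proj, funext_iff]

lemma eq_of_forall_proj_eq (h : ∀ p, proj c p = proj d p) : c = d := by
  simp only [proj_eq_proj_iff] at h
  refine Prod.ext (funext fun p => (h p).1) (funext fun y => ?_)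
  cases y with
  | inl x => exact (h _).2.2 x rfl
  | inr p => exact (h p).2.1

lemma forall_proj_le_iff : (∀ p, proj c p ≤ proj d p) ↔ c.1 = d.1 ∧ N.ldelayed c.2 d.2 := by
  simp only [proj_le_proj_iff]
  constructor
  · intro h
    refine ⟨funext fun p => (h p).1, fun p => d.2 (.inr p) - c.2 (.inr p),
      fun p => sub_nonneg.2 (h p).2.1, funext fun y => ?_⟩
    cases y with
    | inl x => exact ((h _).2.2 x rfl).symm
    | inr p => exact (add_sub_cancel _ _).symm
  · rintro ⟨hq, δ, hδ, hv⟩ p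
    rw [hv]
    exact ⟨congrFun hq p, le_add_of_nonneg_right (hδ p), fun _ _ => rfl⟩

end Proj

noncomputable def patch (P : Finset (Fin N.k)) (c d : N.State × N.LVal) : N.State × N.LVal :=
  (fun p => if p ∈ P then d.1 p else c.1 p, fun y => match y with
    | .inl x => if N.owner x ∈ P then d.2 (.inl x) else c.2 (.inl x)
    | .inr p => if p ∈ P then d.2 (.inr p) else c.2 (.inr p))

section Patch

variable {P : Finset (Fin N.k)} {c d : N.State × N.LVal} {p : Fin N.k}

lemma proj_patch_of_mem (hp : p ∈ P) : proj (patch P c d) p = proj d p :=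
  proj_eq_proj_iff.2 ⟨by simp [patch, hp], by simp [patch, hp], fun x hx => by simp [patch, hp, hx]⟩

lemma proj_patch_of_notMem (hp : p ∉ P) : proj (patch P c d) p = proj c p :=
  proj_eq_proj_iff.2 ⟨by simp [patch, hp], by simp [patch, hp], fun x hx => by simp [patch, hp, hx]⟩

lemma proj_le_proj_patch (h : ∀ p ∈ P, proj c p ≤ proj d p) (p : Fin N.k) :
    proj c p ≤ proj (patch P c d) p := by
  by_cases hp : p ∈ P
  · exact (h p hp).trans_eq (proj_patch_of_mem hp).symm
  · exact (proj_patch_of_notMem hp).symm.le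

end Patch

section Lact

variable {b : N.Act} {c d : N.State × N.LVal}

lemma owner_mem_dom_of_mem_resets
    {tr : ∀ p, p ∈ N.dom b → N.Loc p × Guard N.Clock × Set N.Clock × N.Loc p}
    (htr : ∀ p h, tr p h ∈ N.Trans b p) {x : N.Clock}
    (hx : x ∈ {x | ∃ p h, x ∈ (tr p h).2.2.1}) : N.owner x ∈ N.dom b := by
  obtain ⟨p, hp, hx⟩ := hx
  rwa [(N.trans_wf b p _ (htr p hp)).2 x hx]

lemma lreset_inl (R : Set N.Clock) (v : N.LVal) (x : N.Clock) :
    N.lreset R v (.inl x) = if x ∈ R then v (.inr (N.owner x)) else v (.inl x) := rfl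

lemma lact_apply_inr (h : N.lact b c d) (p : Fin N.k) : d.2 (.inr p) = c.2 (.inr p) := by
  obtain ⟨_, -, -, -, -, hres⟩ := h
  rw [hres]
  rfl

lemma proj_of_lact_of_notMem (h : N.lact b c d) {p : Fin N.k} (hp : p ∉ N.dom b) :
    proj d p = proj c p := by
  have htime := lact_apply_inr h p
  obtain ⟨tr, htr, hout, -, -, hres⟩ := h
  refine proj_eq_proj_iff.2 ⟨hout p hp, htime, fun x hx => ?_⟩
  rw [hres, lreset_inl]
  refine if_neg fun hR => hp ?_
  exact hx ▸ owner_mem_dom_of_mem_resets (fun p h => (htr p h).1) hR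

lemma exists_lact_of_proj_eq (h : N.lact b c d) {c' : N.State × N.LVal}
    (hc : ∀ p ∈ N.dom b, proj c' p = proj c p) :
    ∃ d', N.lact b c' d' ∧ ∀ p ∈ N.dom b, proj d' p = proj d p := by
  obtain ⟨tr, htr, hout, hsync, hguard, hres⟩ := h
  have hc := fun p hp => proj_eq_proj_iff.1 (hc p hp)
  refine ⟨(fun p => if p ∈ N.dom b then d.1 p else c'.1 p,
    N.lreset {x | ∃ p h, x ∈ (tr p h).2.2.1} c'.2), ⟨tr, ?_, ?_, ?_, ?_, rfl⟩, ?_⟩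
  · intro p hp
    exact ⟨(htr p hp).1, (htr p hp).2.1.trans (hc p hp).1.symm, by simp [hp, (htr p hp).2.2]⟩
  · intro p hp
    simp [hp]
  · intro p hp p' hp'
    rw [(hc p hp).2.1, (hc p' hp').2.1]
    exact hsync p hp p' hp'
  · intro p hp g hg
    have hown := (N.trans_wf b p _ (htr p hp).1).1 g hg
    have hsat := hguard p hp g hg
    show Cmp.sat _ (c'.2 (.inr (N.owner g.1)) - c'.2 (.inl g.1)) _
    rwa [hown, (hc p hp).2.1, (hc p hp).2.2 g.1 hown, ← hown]
  · intro p hp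
    rw [proj_eq_proj_iff, hres]
    refine ⟨by simp [hp], (hc p hp).2.1, fun x hx => ?_⟩
    dsimp only
    rw [lreset_inl, lreset_inl, hx, (hc p hp).2.1, (hc p hp).2.2 x hx]

end Lact

lemma ldelayed.apply_inl {v v' : N.LVal} (h : N.ldelayed v v') (x : N.Clock) :
    v' (.inl x) = v (.inl x) := by
  obtain ⟨δ, -, rfl⟩ := h
  rfl

lemma ldelayed.proj_le {q : N.State} {v v' : N.LVal} (h : N.ldelayed v v') (p : Fin N.k) :
    proj (q, v) p ≤ proj (q, v') p :=
  (forall_proj_le_iff (c := (q, v)) (d := (q, v'))).2 ⟨rfl, h⟩ p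

section LRunT

variable {u : List (N.Act × ℝ)} {c c2 : N.State × N.LVal}

lemma LRunT.of_le {c' : N.State × N.LVal} (hc : ∀ p, proj c p ≤ proj c' p)
    (h : N.LRunT u c' c2) : N.LRunT u c c2 := by
  obtain ⟨q, v⟩ := c
  cases h with
  | nil hd =>
    obtain ⟨rfl, hd⟩ := forall_proj_le_iff.1 fun p => (hc p).trans (hd.proj_le p)
    exact .nil hd
  | cons hd hb hθ h =>
    obtain ⟨rfl, hd⟩ := forall_proj_le_iff.1 fun p => (hc p).trans (hd.proj_le p)
    exact .cons hd hb hθ h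

lemma LRunT.cons_of_le {e : N.Act × ℝ} {x y : N.State × N.LVal} (hx : ∀ p, proj c p ≤ proj x p)
    (he : N.lact e.1 x y) (hθ : ∀ p ∈ N.dom e.1, x.2 (.inr p) = e.2) (h : N.LRunT u y c2) :
    N.LRunT (e :: u) c c2 := by
  obtain ⟨q, v⟩ := c
  obtain ⟨q', v'⟩ := x
  obtain ⟨rfl, hd⟩ := forall_proj_le_iff.1 hx
  exact .cons hd he hθ h

lemma LRunT.exists_of_cons {e : N.Act × ℝ} (h : N.LRunT (e :: u) c c2) :
    ∃ x y, (∀ p, proj c p ≤ proj x p) ∧ N.lact e.1 x y ∧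
      (∀ p ∈ N.dom e.1, x.2 (.inr p) = e.2) ∧ N.LRunT u y c2 := by
  obtain ⟨q, v⟩ := c
  cases h with
  | cons hd hb hθ h => exact ⟨_, _, hd.proj_le, hb, hθ, h⟩

lemma LRunT.apply_inr_le_of_mem (h : N.LRunT u c c2) {e : N.Act × ℝ} (he : e ∈ u) {p : Fin N.k}
    (hp : p ∈ N.dom e.1) : c.2 (.inr p) ≤ e.2 := by
  induction u generalizing c with
  | nil => simp at he
  | cons f u ih =>
    obtain ⟨x, y, hcx, hf, hθ, h⟩ := h.exists_of_cons
    have hcx := (proj_le_proj_iff.1 (hcx p)).2.1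
    rcases List.mem_cons.1 he with rfl | he
    · exact hcx.trans (hθ p hp).le
    · exact hcx.trans ((lact_apply_inr hf p).symm.le.trans (ih h he))

lemma LRunT.swap {e f : N.Act × ℝ} (h : N.LRunT (e :: f :: u) c c2) (hfe : f.2 < e.2) :
    N.LRunT (f :: e :: u) c c2 := by
  obtain ⟨x1, y1, hcx1, ha, hθa, h⟩ := h.exists_of_cons
  obtain ⟨x2, y2, hy1x2, hb, hθb, hl⟩ := h.exists_of_cons
  have hdisj : ∀ p ∈ N.dom e.1, p ∉ N.dom f.1 := fun p hpa hpb => by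
    have := (proj_le_proj_iff.1 (hy1x2 p)).2.1
    rw [lact_apply_inr ha, hθa p hpa, hθb p hpb] at this
    linarith
  have hcx2 : ∀ p ∉ N.dom e.1, proj c p ≤ proj x2 p := fun p hp =>
    calc proj c p ≤ proj x1 p := hcx1 p
      _ = proj y1 p := (proj_of_lact_of_notMem ha hp).symm
      _ ≤ proj x2 p := hy1x2 p
  obtain ⟨y1', hb', hy1'⟩ := exists_lact_of_proj_eq hb (c' := patch (N.dom f.1) c x2)
    fun p hp => proj_patch_of_mem hp
  obtain ⟨y2', ha', hy2'⟩ := exists_lact_of_proj_eq ha (c' := patch (N.dom e.1) y1' x1)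
    fun p hp => proj_patch_of_mem hp
  have hy1'c : ∀ p ∉ N.dom f.1, proj y1' p = proj c p := fun p hp =>
    (proj_of_lact_of_notMem hb' hp).trans (proj_patch_of_notMem hp)
  have hy2'y1' : ∀ p ∉ N.dom e.1, proj y2' p = proj y1' p := fun p hp =>
    (proj_of_lact_of_notMem ha' hp).trans (proj_patch_of_notMem hp)
  refine cons_of_le (proj_le_proj_patch fun p hp => hcx2 p fun hpa => hdisj p hpa hp) hb'
    (fun p hp => ?_) (cons_of_le (proj_le_proj_patch fun p hp => ?_) ha' (fun p hp => ?_)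
    (hl.of_le fun p => ?_))
  · rw [← hθb p hp]
    exact congrArg ProcState.time (proj_patch_of_mem hp)
  · exact (hy1'c p (hdisj p hp)).trans_le (hcx1 p)
  · rw [← hθa p hp]
    exact congrArg ProcState.time (proj_patch_of_mem hp)
  · by_cases hpa : p ∈ N.dom e.1
    · calc proj y2' p = proj y1 p := hy2' p hpa
        _ ≤ proj x2 p := hy1x2 p
        _ = proj y2 p := (proj_of_lact_of_notMem hb (hdisj p hpa)).symm
    by_cases hpb : p ∈ N.dom f.1
    · rw [hy2'y1' p hpa, hy1' p hpb]
    calc proj y2' p = proj c p := (hy2'y1' p hpa).trans (hy1'c p hpb)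
      _ ≤ proj x2 p := hcx2 p hpa
      _ = proj y2 p := (proj_of_lact_of_notMem hb hpb).symm

lemma LRunT.orderedInsert {e : N.Act × ℝ} (h : N.LRunT (e :: u) c c2) :
    N.LRunT (u.orderedInsert (fun e f => e.2 ≤ f.2) e) c c2 := by
  induction u generalizing c with
  | nil => exact h
  | cons f u ih =>
    rw [List.orderedInsert_cons]
    split_ifs with hef
    · exact h
    · obtain ⟨x, y, hcx, hf, hθ, h⟩ := (h.swap (not_le.1 hef)).exists_of_cons
      exact cons_of_le hcx hf hθ (ih h)

lemma LRunT.insertionSort (h : N.LRunT u c c2) :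
    N.LRunT (u.insertionSort fun e f => e.2 ≤ f.2) c c2 := by
  induction u generalizing c with
  | nil => exact h
  | cons e u ih =>
    obtain ⟨x, y, hcx, he, hθ, h⟩ := h.exists_of_cons
    exact (cons_of_le hcx he hθ (ih h)).orderedInsert

lemma LRunT.exists_perm_pairwise (h : N.LRunT u c c2) :
    ∃ u', u'.Pairwise (fun e f => e.2 ≤ f.2) ∧ u'.Perm u ∧ N.LRunT u' c c2 := by
  have : Std.Total fun e f : N.Act × ℝ => e.2 ≤ f.2 := ⟨fun e f => le_total e.2 f.2⟩
  have : IsTrans _ fun e f : N.Act × ℝ => e.2 ≤ f.2 := ⟨fun _ _ _ => le_trans⟩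
  exact ⟨_, List.pairwise_insertionSort _ _, List.perm_insertionSort _ _, h.insertionSort⟩

end LRunT

/-- Steps on actions with an empty domain change nothing and have no execution time,
so they are dropped. -/
lemma LRun.exists_lrunT {u : List N.Act} {c c2 : N.State × N.LVal} (h : N.LRun u c c2) :
    ∃ ut : List (N.Act × ℝ), (∀ e ∈ ut, (N.dom e.1).Nonempty) ∧ N.LRunT ut c c2 := by
  induction h with
  | nil hd => exact ⟨[], by simp, .nil hd⟩
  | @cons b u q v v1 c1 c2 hd hb h ih =>
    obtain ⟨ut, hne, ht⟩ := ih
    by_cases hdom : (N.dom b).Nonempty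
    · obtain ⟨p0, hp0⟩ := hdom
      refine ⟨(b, v1 (.inr p0)) :: ut, List.forall_mem_cons.2 ⟨⟨p0, hp0⟩, hne⟩,
        .cons hd hb (fun p hp => ?_) ht⟩
      obtain ⟨_, -, -, hsync, -, -⟩ := hb
      exact hsync p hp p0 hp0
    · obtain rfl : c1 = (q, v1) :=
        eq_of_forall_proj_eq fun p => proj_of_lact_of_notMem hb fun hp => hdom ⟨p, hp⟩
      exact ⟨ut, hne, ht.of_le hd.proj_le⟩

lemma greset_inl (R : Set N.Clock) (v : N.GVal) (x : N.Clock) :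
    N.greset R v (.inl x) = if x ∈ R then v (.inr ()) else v (.inl x) := rfl

lemma exists_gact_of_lact {b : N.Act} {q : N.State} {v : N.LVal} {d : N.State × N.LVal}
    (hb : N.lact b (q, v) d) {w : N.GVal} (ht : ∀ p ∈ N.dom b, v (.inr p) = w (.inr ()))
    (hoff : ∀ x, w (.inl x) = v (.inl x)) :
    ∃ w', N.gact b (q, w) (d.1, w') ∧ w' (.inr ()) = w (.inr ()) ∧
      ∀ x, w' (.inl x) = d.2 (.inl x) := by
  obtain ⟨tr, htr, hout, -, hguard, hres⟩ := hb
  refine ⟨N.greset {x | ∃ p h, x ∈ (tr p h).2.2.1} w,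
    ⟨tr, htr, hout, fun p hp g hg => ?_, rfl⟩, rfl, fun x => ?_⟩
  · have hown := (N.trans_wf b p _ (htr p hp).1).1 g hg
    have hsat := hguard p hp g hg
    show Cmp.sat _ (w (.inr ()) - w (.inl g.1)) _
    rwa [← ht _ (hown ▸ hp), hoff]
  · rw [greset_inl, hres, lreset_inl]
    split_ifs with hx
    exacts [(ht _ (owner_mem_dom_of_mem_resets (fun p h => (htr p h).1) hx)).symm, hoff x]

lemma LRunT.exists_grun {u : List (N.Act × ℝ)} {c c2 : N.State × N.LVal} (h : N.LRunT u c c2)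
    (hu : u.Pairwise fun e f => e.2 ≤ f.2) (w : N.GVal) (hoff : ∀ x, w (.inl x) = c.2 (.inl x))
    (hw : ∀ e ∈ u, w (.inr ()) ≤ e.2) : ∃ u' w', N.GRun u' (c.1, w) (c2.1, w') := by
  induction h generalizing w with
  | nil => exact ⟨[], _, .nil 0 le_rfl⟩
  | @cons b θ u q v v1 c1 c2 hd hb hθ h ih =>
    have hδ : 0 ≤ θ - w (.inr ()) := sub_nonneg.2 (hw _ List.mem_cons_self)
    have hwθ : N.gdelay w (θ - w (.inr ())) (.inr ()) = θ := add_sub_cancel _ _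
    obtain ⟨w', hgact, hw't, hw'off⟩ := exists_gact_of_lact hb
      (fun p hp => (hθ p hp).trans hwθ.symm) (fun x => (hoff x).trans (hd.apply_inl x).symm)
    obtain ⟨u', w'', hrun⟩ := ih (List.pairwise_cons.1 hu).2 w' hw'off
      fun e he => (hw't.trans hwθ).trans_le ((List.pairwise_cons.1 hu).1 e he)
    exact ⟨b :: u', w'', .cons _ hδ hgact hrun⟩

lemma ldelayed_toLocal_gdelay (v : N.GVal) {δ : ℝ} (hδ : 0 ≤ δ) :
    N.ldelayed (N.toLocal v) (N.toLocal (N.gdelay v δ)) := by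
  refine ⟨fun _ => δ, fun _ => hδ, ?_⟩
  funext y
  cases y <;> rfl

lemma lact_toLocal_of_gact {b : N.Act} {q : N.State} {w : N.GVal} {d : N.State × N.GVal}
    (h : N.gact b (q, w) d) : N.lact b (q, N.toLocal w) (d.1, N.toLocal d.2) := by
  obtain ⟨tr, htr, hout, hguard, hres⟩ := h
  refine ⟨tr, htr, hout, fun _ _ _ _ => rfl, hguard, ?_⟩
  rw [hres]
  funext y
  cases y <;> rfl

lemma GRun.lrun_toLocal {u : List N.Act} {c d : N.State × N.GVal} (h : N.GRun u c d) :
    N.LRun u (c.1, N.toLocal c.2) (d.1, N.toLocal d.2) := by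
  induction h with
  | nil δ hδ => exact .nil (ldelayed_toLocal_gdelay _ hδ)
  | cons δ hδ hb _ ih => exact .cons (ldelayed_toLocal_gdelay _ hδ) (lact_toLocal_of_gact hb) ih

end Network

theorem stmt6 (N : Network) (q : N.State) : N.GReach q ↔ N.LReach q := by
  constructor
  · rintro ⟨u, v, h⟩
    have hinit : N.toLocal N.gvalInit = N.lvalInit := by
      funext y
      cases y <;> rfl
    exact ⟨u, _, hinit ▸ h.lrun_toLocal⟩
  · rintro ⟨u, v, h⟩
    obtain ⟨ut, hne, ht⟩ := h.exists_lrunT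
    obtain ⟨us, hsorted, hperm, hs⟩ := ht.exists_perm_pairwise
    refine hs.exists_grun hsorted N.gvalInit (fun _ => rfl) fun e he => ?_
    obtain ⟨p, hp⟩ := hne e (hperm.mem_iff.1 he)
    exact ht.apply_inr_le_of_mem (hperm.mem_iff.1 he) hp
end

section
/- Pre property of local zone transitions: if (q,v) =u=> (q',v') is a local run and v ∈ Z for a time-elapsed local zone Z, then there is a local zone transition sequence (q,Z) =u=> (q',Z') with v' ∈ Z'. -/
open Classical

/-!
Each local action step `(q, v₁) → (q', w)` with `v₁ ∈ Z` gives a zone step out of `(q, Z)`: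
`v₁` lies in `Z ∩ Z_g ∩ Z_sync`, so `w` lies in its reset image and hence in the successor
zone. Local delays stay inside time-elapsed zones, and successor zones are time-elapsed
because local elapse is idempotent, so induction along the run goes through.
-/

namespace Network

variable (N : Network)

lemma ldelayed_refl (v : N.LVal) : N.ldelayed v v :=
  ⟨fun _ => 0, fun _ => le_rfl, by funext y; cases y <;> simp⟩

variable {N}

lemma ldelayed_trans {v₁ v₂ v₃ : N.LVal} (h₁₂ : N.ldelayed v₁ v₂) (h₂₃ : N.ldelayed v₂ v₃) :
    N.ldelayed v₁ v₃ := by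
  obtain ⟨δ, hδ, rfl⟩ := h₁₂
  obtain ⟨δ', hδ', rfl⟩ := h₂₃
  refine ⟨δ + δ', fun p => add_nonneg (hδ p) (hδ' p), ?_⟩
  funext y; cases y <;> simp [add_assoc]

lemma subset_lelapse (S : Set N.LVal) : S ⊆ N.lelapse S :=
  fun v hv => ⟨v, hv, N.ldelayed_refl v⟩

lemma lelapse_lelapse (S : Set N.LVal) : N.lelapse (N.lelapse S) = N.lelapse S := by
  refine Set.Subset.antisymm ?_ (subset_lelapse _)
  rintro w ⟨v, ⟨v₀, hv₀, hd₀⟩, hd⟩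
  exact ⟨v₀, hv₀, ldelayed_trans hd₀ hd⟩

lemma exists_lzstep_of_lact {b : N.Act} {q q' : N.State} {v w : N.LVal} {Z : Set N.LVal}
    (hb : N.lact b (q, v) (q', w)) (hv : v ∈ Z) :
    ∃ Z', N.lzstep b (q, Z) (q', Z') ∧ w ∈ Z' ∧ N.lelapse Z' ⊆ Z' := by
  obtain ⟨tr, htr, hout, hsync, hg, rfl⟩ := hb
  have hw : N.lreset {x | ∃ p h, x ∈ (tr p h).2.2.1} v ∈
      N.lelapse (N.lreset {x | ∃ p h, x ∈ (tr p h).2.2.1} ''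
        (Z ∩ {w | ∀ p (h : p ∈ N.dom b), N.lgsat w (tr p h).2.1}
          ∩ {w | ∀ p ∈ N.dom b, ∀ p' ∈ N.dom b, w (.inr p) = w (.inr p')})) :=
    subset_lelapse _ ⟨v, ⟨⟨hv, hg⟩, hsync⟩, rfl⟩
  exact ⟨_, ⟨tr, htr, hout, rfl, _, hw⟩, hw, (lelapse_lelapse _).le⟩

lemma LRun.exists_lzrun {u : List N.Act} {c c' : N.State × N.LVal} (hr : N.LRun u c c')
    {Z : Set N.LVal} (hv : c.2 ∈ Z) (hZ : N.lelapse Z ⊆ Z) :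
    ∃ Z', N.LZRun u (c.1, Z) (c'.1, Z') ∧ c'.2 ∈ Z' := by
  induction hr generalizing Z with
  | nil hd => exact ⟨Z, .nil _, hZ ⟨_, hv, hd⟩⟩
  | cons hd hb _ ih =>
    obtain ⟨Z₁, hstep, hw, hZ₁⟩ := exists_lzstep_of_lact hb (hZ ⟨_, hv, hd⟩)
    obtain ⟨Z', hrun, hv'⟩ := ih hw hZ₁
    exact ⟨Z', .cons hstep hrun, hv'⟩

end Network

theorem stmt9_general (N : Network) (u : List N.Act) (q q' : N.State) (v v' : N.LVal)
    (Z : Set N.LVal) (hte : Z = N.lelapse Z) (hv : v ∈ Z)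
    (hr : N.LRun u (q, v) (q', v')) :
    ∃ Z', N.LZRun u (q, Z) (q', Z') ∧ v' ∈ Z' :=
  hr.exists_lzrun hv hte.symm.subset

theorem stmt9 (N : Network) (u : List N.Act) (q q' : N.State) (v v' : N.LVal)
    (Z : Set N.LVal) (hZ : N.IsLZone Z) (hte : Z = N.lelapse Z) (hv : v ∈ Z)
    (hr : N.LRun u (q, v) (q', v')) :
    ∃ Z', N.LZRun u (q, Z) (q', Z') ∧ v' ∈ Z' :=
  stmt9_general N u q q' v v' Z hte hv hr
end
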